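/- Consider the time-varying MPC setup: fix real matrices A (n×n), B (n×m), a horizon T ≥ 1, a real δ ∈ [0,1), and sequences (Q_t)_{t∈ℕ} of symmetric positive definite n×n matrices and (R_t)_{t∈ℕ} of symmetric positive definite m×m matrices satisfying (1−δ)Q_t ⪯ Q_{t+1} ⪯ (1+δ)Q_t and (1−δ)R_t ⪯ R_{t+1} ⪯ (1+δ)R_t for all t. For weights (Q,R) let P_k(Q,R) be the Riccati iterates with P_0 = 0 and P_{k+1} = AᵀP_kA − AᵀP_kB(BᵀP_kB+R)⁻¹BᵀP_kA + Q, and let the MPC closed-loop trajectory from x_0 be x_{t+1} = Ax_t + Bû_t with û_t = −(BᵀP_{T−1}(Q_t,R_t)B+R_t)⁻¹BᵀP_{T−1}(Q_t,R_t)A x_t. Suppose ρ ∈ (0,1) satisfies ρ·P_T(Q_t,R_t) ⪯ Q_t for all t, α > 1 satisfies P_T(Q_t,R_t) ⪯ α·P_{T−1}(Q_t,R_t) for all t, and that γ = (1−ρ)α/(1−δ) < 1. Then the total realized MPC cost is finite and satisfies ∑_{t=0}^{∞} (x_tᵀQ_tx_t + û_tᵀR_tû_t) ≤ (ρ/(1−γ))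 · x_0ᵀP_T(Q_0,R_0)x_0; in particular the series of (nonnegative) stage costs converges. -/

import Mathlib

/-!
Write `V t = x tᵀ P_T(Q t, R t) x t` and `ℓ t` for the stage cost. Completing the square in the
Riccati recursion gives `V t = ℓ t + x (t+1)ᵀ P_{T-1}(Q t, R t) x (t+1)`. The hypothesis on `ρ` gives
`ℓ t ≥ ρ V t`; the hypothesis on `α`, together with the fact that weights growing by at most `1 + δ`
scale every Riccati iterate by at most `1 + δ`, gives `V (t+1) ≤ α (1 + δ) (V t - ℓ t)`. As
`(1 - ρ) α (1 + δ) ≤ γ`, this forces `ℓ t ≤ ρ / (1 - γ) * (V t - V (t+1))`, which telescopes.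
-/

open Matrix

/-- The finite-horizon Riccati iteration with `P 0 = 0` and
`P (k+1) = AᵀP_kA − AᵀP_kB(BᵀP_kB+R)⁻¹BᵀP_kA + Q`. -/
noncomputable def riccati {n m : ℕ} (A : Matrix (Fin n) (Fin n) ℝ)
    (B : Matrix (Fin n) (Fin m) ℝ) (Q : Matrix (Fin n) (Fin n) ℝ)
    (R : Matrix (Fin m) (Fin m) ℝ) : ℕ → Matrix (Fin n) (Fin n) ℝ
  | 0 => 0
  | k + 1 =>
      Aᵀ * riccati A B Q R k * A -
        Aᵀ * riccati A B Q R k * B * (Bᵀ * riccati A B Q R k * B + R)⁻¹ *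
          Bᵀ * riccati A B Q R k * A + Q

/-- The Loewner order on real square matrices: `X ⪯ Y` iff `Y − X` is positive semidefinite. -/
def loewnerLE {n : ℕ} (X Y : Matrix (Fin n) (Fin n) ℝ) : Prop := (Y - X).PosSemidef

section CompletingTheSquare

variable {ι κ 𝕜 : Type*} [Fintype ι] [Fintype κ] [DecidableEq κ] [Field 𝕜]

noncomputable def riccatiStep (A : Matrix ι ι 𝕜) (B : Matrix ι κ 𝕜) (Q : Matrix ι ι 𝕜)
    (R : Matrix κ κ 𝕜) (P : Matrix ι ι 𝕜) : Matrix ι ι 𝕜 :=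
  Aᵀ * P * A - Aᵀ * P * B * (Bᵀ * P * B + R)⁻¹ * Bᵀ * P * A + Q

noncomputable def riccatiGain (A : Matrix ι ι 𝕜) (B : Matrix ι κ 𝕜) (R : Matrix κ κ 𝕜)
    (P : Matrix ι ι 𝕜) : Matrix κ ι 𝕜 :=
  (Bᵀ * P * B + R)⁻¹ * Bᵀ * P * A

omit [DecidableEq κ] in
theorem Matrix.IsSymm.dotProduct_mulVec_comm {S : Matrix ι ι 𝕜} (hS : S.IsSymm) (v w : ι → 𝕜) :
    v ⬝ᵥ (S *ᵥ w) = w ⬝ᵥ (S *ᵥ v) := by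
  rw [← dotProduct_transpose_mulVec, hS.eq]

omit [DecidableEq κ] in
theorem dotProduct_transpose_mul_mul_mulVec (C : Matrix ι κ 𝕜) (S : Matrix ι ι 𝕜) (v w : κ → 𝕜) :
    v ⬝ᵥ ((Cᵀ * S * C) *ᵥ w) = (C *ᵥ v) ⬝ᵥ (S *ᵥ (C *ᵥ w)) := by
  rw [← mulVec_mulVec, ← mulVec_mulVec, dotProduct_transpose_mulVec, dotProduct_comm]

omit [Fintype κ] [DecidableEq κ] in
theorem isSymm_transpose_mul_mul_add {S : Matrix ι ι 𝕜} {R : Matrix κ κ 𝕜} (hS : S.IsSymm)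
    (hR : R.IsSymm) (B : Matrix ι κ 𝕜) : (Bᵀ * S * B + R).IsSymm := by
  simp only [IsSymm, transpose_add, transpose_mul, transpose_transpose, hS.eq, hR.eq,
    Matrix.mul_assoc]

theorem isSymm_riccatiStep {Q P : Matrix ι ι 𝕜} {R : Matrix κ κ 𝕜} (hQ : Q.IsSymm)
    (hR : R.IsSymm) (hP : P.IsSymm) (A : Matrix ι ι 𝕜) (B : Matrix ι κ 𝕜) :
    (riccatiStep A B Q R P).IsSymm := by
  simp only [IsSymm, riccatiStep, transpose_add, transpose_sub, transpose_mul, transpose_transpose,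
    transpose_nonsing_inv, hP.eq, hQ.eq, hR.eq, Matrix.mul_assoc]

theorem mulVec_riccatiGain_mulVec {R : Matrix κ κ 𝕜} {P : Matrix ι ι 𝕜}
    (hM : IsUnit (Bᵀ * P * B + R).det) (A : Matrix ι ι 𝕜) (x : ι → 𝕜) :
    (Bᵀ * P * B + R) *ᵥ (riccatiGain A B R P *ᵥ x) = Bᵀ *ᵥ (P *ᵥ (A *ᵥ x)) := by
  simp only [riccatiGain, mulVec_mulVec, ← Matrix.mul_assoc, mul_nonsing_inv _ hM, Matrix.one_mul]

theorem cost_eq_riccatiStep_add_sq (A : Matrix ι ι 𝕜) (B : Matrix ι κ 𝕜) (Q : Matrix ι ι 𝕜)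
    {R : Matrix κ κ 𝕜} {P : Matrix ι ι 𝕜} (hR : R.IsSymm) (hP : P.IsSymm)
    (hM : IsUnit (Bᵀ * P * B + R).det) (x : ι → 𝕜) (u : κ → 𝕜) :
    x ⬝ᵥ (Q *ᵥ x) + u ⬝ᵥ (R *ᵥ u) + (A *ᵥ x + B *ᵥ u) ⬝ᵥ (P *ᵥ (A *ᵥ x + B *ᵥ u)) =
      x ⬝ᵥ (riccatiStep A B Q R P *ᵥ x) +
        (u + riccatiGain A B R P *ᵥ x) ⬝ᵥ ((Bᵀ * P * B + R) *ᵥ (u + riccatiGain A B R P *ᵥ x)) := by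
  have hMw := mulVec_riccatiGain_mulVec hM A x
  set M := Bᵀ * P * B + R with hMdef
  set w := riccatiGain A B R P *ᵥ x
  set a := A *ᵥ x
  have hcross : (B *ᵥ u) ⬝ᵥ (P *ᵥ a) = u ⬝ᵥ (M *ᵥ w) := by
    rw [hMw, dotProduct_transpose_mulVec, dotProduct_comm]
  have hcost : (a + B *ᵥ u) ⬝ᵥ (P *ᵥ (a + B *ᵥ u)) =
      a ⬝ᵥ (P *ᵥ a) + 2 * (u ⬝ᵥ (M *ᵥ w)) + u ⬝ᵥ ((Bᵀ * P * B) *ᵥ u) := by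
    simp only [mulVec_add, dotProduct_add, add_dotProduct]
    rw [dotProduct_transpose_mul_mul_mulVec, hP.dotProduct_mulVec_comm a (B *ᵥ u), hcross]
    ring
  have hstep : x ⬝ᵥ (riccatiStep A B Q R P *ᵥ x) =
      a ⬝ᵥ (P *ᵥ a) - w ⬝ᵥ (M *ᵥ w) + x ⬝ᵥ (Q *ᵥ x) := by
    have hgain : (Aᵀ * P * B * M⁻¹ * Bᵀ * P * A) *ᵥ x = Aᵀ *ᵥ (P *ᵥ (B *ᵥ w)) := by
      simp only [w, hMdef, riccatiGain, mulVec_mulVec, Matrix.mul_assoc]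
    have hgain' : x ⬝ᵥ (Aᵀ *ᵥ (P *ᵥ (B *ᵥ w))) = w ⬝ᵥ (M *ᵥ w) := by
      rw [hMw, dotProduct_transpose_mulVec, dotProduct_transpose_mulVec, dotProduct_comm,
        hP.dotProduct_mulVec_comm]
      exact dotProduct_comm _ _
    rw [riccatiStep, add_mulVec, sub_mulVec, dotProduct_add, dotProduct_sub, hgain, hgain',
      dotProduct_transpose_mul_mul_mulVec]
  have hMu : u ⬝ᵥ (M *ᵥ u) = u ⬝ᵥ ((Bᵀ * P * B) *ᵥ u) + u ⬝ᵥ (R *ᵥ u) := by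
    rw [hMdef, add_mulVec, dotProduct_add]
  have hsq : (u + w) ⬝ᵥ (M *ᵥ (u + w)) =
      u ⬝ᵥ (M *ᵥ u) + 2 * (u ⬝ᵥ (M *ᵥ w)) + w ⬝ᵥ (M *ᵥ w) := by
    simp only [mulVec_add, dotProduct_add, add_dotProduct]
    rw [(isSymm_transpose_mul_mul_add hP hR B).dotProduct_mulVec_comm w u]
    ring
  rw [hcost, hstep, hsq, hMu]
  ring

theorem dotProduct_riccatiStep_mulVec_eq (A : Matrix ι ι 𝕜) (B : Matrix ι κ 𝕜) (Q : Matrix ι ι 𝕜)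
    {R : Matrix κ κ 𝕜} {P : Matrix ι ι 𝕜} (hR : R.IsSymm) (hP : P.IsSymm)
    (hM : IsUnit (Bᵀ * P * B + R).det) (x : ι → 𝕜) :
    x ⬝ᵥ (riccatiStep A B Q R P *ᵥ x) =
      x ⬝ᵥ (Q *ᵥ x) + (-(riccatiGain A B R P *ᵥ x)) ⬝ᵥ (R *ᵥ -(riccatiGain A B R P *ᵥ x)) +
        (A *ᵥ x + B *ᵥ -(riccatiGain A B R P *ᵥ x)) ⬝ᵥ
          (P *ᵥ (A *ᵥ x + B *ᵥ -(riccatiGain A B R P *ᵥ x))) := by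
  rw [cost_eq_riccatiStep_add_sq A B Q hR hP hM, neg_add_cancel, zero_dotProduct, add_zero]

end CompletingTheSquare

section PositiveSemidefinite

variable {ι κ : Type*} [Fintype ι] [Fintype κ] [DecidableEq κ]

omit [Fintype ι] in
theorem Matrix.PosSemidef.isSymm {S : Matrix ι ι ℝ} (hS : S.PosSemidef) : S.IsSymm :=
  isHermitian_iff_isSymm.mp hS.1

theorem Matrix.PosSemidef.dotProduct_mulVec_nonneg' {S : Matrix ι ι ℝ} (hS : S.PosSemidef)
    (v : ι → ℝ) : 0 ≤ v ⬝ᵥ (S *ᵥ v) := by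
  simpa using hS.dotProduct_mulVec_nonneg v

omit [DecidableEq κ] in
theorem posDef_transpose_mul_mul_add {P : Matrix ι ι ℝ} {R : Matrix κ κ ℝ} (hP : P.PosSemidef)
    (hR : R.PosDef) (B : Matrix ι κ ℝ) : (Bᵀ * P * B + R).PosDef := by
  simpa using PosDef.posSemidef_add (hP.conjTranspose_mul_mul_same B) hR

theorem isUnit_det_transpose_mul_mul_add {P : Matrix ι ι ℝ} {R : Matrix κ κ ℝ}
    (hP : P.PosSemidef) (hR : R.PosDef) (B : Matrix ι κ ℝ) : IsUnit (Bᵀ * P * B + R).det :=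
  (posDef_transpose_mul_mul_add hP hR B).det_pos.ne'.isUnit

theorem dotProduct_riccatiStep_mulVec_le (A : Matrix ι ι ℝ) (B : Matrix ι κ ℝ) (Q : Matrix ι ι ℝ)
    {R : Matrix κ κ ℝ} {P : Matrix ι ι ℝ} (hR : R.PosDef) (hP : P.PosSemidef) (x : ι → ℝ)
    (u : κ → ℝ) :
    x ⬝ᵥ (riccatiStep A B Q R P *ᵥ x) ≤
      x ⬝ᵥ (Q *ᵥ x) + u ⬝ᵥ (R *ᵥ u) + (A *ᵥ x + B *ᵥ u) ⬝ᵥ (P *ᵥ (A *ᵥ x + B *ᵥ u)) := by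
  rw [cost_eq_riccatiStep_add_sq A B Q hR.posSemidef.isSymm hP.isSymm
    (isUnit_det_transpose_mul_mul_add hP hR B)]
  exact le_add_of_nonneg_right
    ((posDef_transpose_mul_mul_add hP hR B).posSemidef.dotProduct_mulVec_nonneg' _)

theorem Matrix.PosSemidef.riccatiStep {P Q : Matrix ι ι ℝ} {R : Matrix κ κ ℝ}
    (hP : P.PosSemidef) (A : Matrix ι ι ℝ) (B : Matrix ι κ ℝ) (hQ : Q.PosSemidef) (hR : R.PosDef) :
    (riccatiStep A B Q R P).PosSemidef := by
  refine .of_dotProduct_mulVec_nonneg (isHermitian_iff_isSymm.mpr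
    (isSymm_riccatiStep hQ.isSymm hR.posSemidef.isSymm hP.isSymm A B)) fun x => ?_
  rw [star_trivial, dotProduct_riccatiStep_mulVec_eq A B Q hR.posSemidef.isSymm hP.isSymm
    (isUnit_det_transpose_mul_mul_add hP hR B)]
  have := hQ.dotProduct_mulVec_nonneg' x
  have := hR.posSemidef.dotProduct_mulVec_nonneg' (-(riccatiGain A B R P *ᵥ x))
  have := hP.dotProduct_mulVec_nonneg' (A *ᵥ x + B *ᵥ -(riccatiGain A B R P *ᵥ x))
  positivity

end PositiveSemidefinite

section Riccati

variable {n m : ℕ}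

theorem loewnerLE.dotProduct_mulVec_le {X Y : Matrix (Fin n) (Fin n) ℝ} (h : loewnerLE X Y)
    (v : Fin n → ℝ) : v ⬝ᵥ (X *ᵥ v) ≤ v ⬝ᵥ (Y *ᵥ v) := by
  have := h.dotProduct_mulVec_nonneg' v
  rwa [sub_mulVec, dotProduct_sub, sub_nonneg] at this

theorem loewnerLE_of_dotProduct_mulVec_le {X Y : Matrix (Fin n) (Fin n) ℝ} (hX : X.IsSymm)
    (hY : Y.IsSymm) (h : ∀ v, v ⬝ᵥ (X *ᵥ v) ≤ v ⬝ᵥ (Y *ᵥ v)) : loewnerLE X Y := by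
  refine .of_dotProduct_mulVec_nonneg (isHermitian_iff_isSymm.mpr (hY.sub hX)) fun v => ?_
  rw [star_trivial, sub_mulVec, dotProduct_sub, sub_nonneg]
  exact h v

theorem dotProduct_smul_mulVec {ι : Type*} [Fintype ι] (c : ℝ) (X : Matrix ι ι ℝ) (v : ι → ℝ) :
    v ⬝ᵥ ((c • X) *ᵥ v) = c * (v ⬝ᵥ (X *ᵥ v)) := by
  rw [smul_mulVec, dotProduct_smul, smul_eq_mul]

variable (A : Matrix (Fin n) (Fin n) ℝ) (B : Matrix (Fin n) (Fin m) ℝ)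

theorem riccati_succ (Q : Matrix (Fin n) (Fin n) ℝ) (R : Matrix (Fin m) (Fin m) ℝ) (k : ℕ) :
    riccati A B Q R (k + 1) = riccatiStep A B Q R (riccati A B Q R k) :=
  rfl

theorem riccati_posSemidef {Q : Matrix (Fin n) (Fin n) ℝ} {R : Matrix (Fin m) (Fin m) ℝ}
    (hQ : Q.PosSemidef) (hR : R.PosDef) : ∀ k, (riccati A B Q R k).PosSemidef
  | 0 => PosSemidef.zero
  | k + 1 => (riccati_posSemidef hQ hR k).riccatiStep A B hQ hR

/-- The optimal input for `(Q, R)` is a feasible input for `(Q', R')`. -/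
theorem riccati_loewnerLE_smul {Q Q' : Matrix (Fin n) (Fin n) ℝ}
    {R R' : Matrix (Fin m) (Fin m) ℝ} (hQ : Q.PosSemidef) (hR : R.PosDef) (hQ' : Q'.PosSemidef)
    (hR' : R'.PosDef) {c : ℝ} (hQc : loewnerLE Q' (c • Q)) (hRc : loewnerLE R' (c • R)) :
    ∀ k, loewnerLE (riccati A B Q' R' k) (c • riccati A B Q R k)
  | 0 => by simpa [riccati, loewnerLE] using PosSemidef.zero
  | k + 1 => by
    have ih := riccati_loewnerLE_smul hQ hR hQ' hR' hQc hRc k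
    have hP := riccati_posSemidef A B hQ hR k
    have hP' := riccati_posSemidef A B hQ' hR' k
    rw [riccati_succ, riccati_succ]
    refine loewnerLE_of_dotProduct_mulVec_le (hP'.riccatiStep A B hQ' hR').isSymm
      ((hP.riccatiStep A B hQ hR).isSymm.smul c) fun x => ?_
    set u := -(riccatiGain A B R (riccati A B Q R k) *ᵥ x)
    set z := A *ᵥ x + B *ᵥ u
    have hQx := hQc.dotProduct_mulVec_le x
    have hRu := hRc.dotProduct_mulVec_le u
    have hPz := ih.dotProduct_mulVec_le z
    rw [dotProduct_smul_mulVec] at hQx hRu hPz ⊢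
    calc x ⬝ᵥ (riccatiStep A B Q' R' (riccati A B Q' R' k) *ᵥ x)
        ≤ x ⬝ᵥ (Q' *ᵥ x) + u ⬝ᵥ (R' *ᵥ u) + z ⬝ᵥ (riccati A B Q' R' k *ᵥ z) :=
          dotProduct_riccatiStep_mulVec_le A B Q' hR' hP' x u
      _ ≤ c * (x ⬝ᵥ (Q *ᵥ x) + u ⬝ᵥ (R *ᵥ u) + z ⬝ᵥ (riccati A B Q R k *ᵥ z)) := by linarith
      _ = c * (x ⬝ᵥ (riccatiStep A B Q R (riccati A B Q R k) *ᵥ x)) := by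
          rw [dotProduct_riccatiStep_mulVec_eq A B Q hR.posSemidef.isSymm hP.isSymm
            (isUnit_det_transpose_mul_mul_add hP hR B)]

end Riccati

theorem summable_and_tsum_le_of_decay {f W : ℕ → ℝ} {ρ β γ : ℝ} (hW : ∀ t, 0 ≤ W t)
    (hcost : ∀ t, ρ * W t ≤ f t) (hdecay : ∀ t, W (t + 1) ≤ β * (W t - f t)) (hβ : 1 ≤ β)
    (hγ : (1 - ρ) * β ≤ γ) (hγ1 : γ < 1) :
    Summable f ∧ ∑' t, f t ≤ ρ / (1 - γ) * W 0 := by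
  have hρ : 0 < ρ := by nlinarith
  set K := ρ / (1 - γ)
  have hK : K * (1 - γ) = ρ := div_mul_cancel₀ _ (by linarith)
  have hK0 : 0 ≤ K := div_nonneg hρ.le (by linarith)
  have hKβ : 1 ≤ K * β := by nlinarith
  have hf : ∀ t, 0 ≤ f t := fun t => (mul_nonneg hρ.le (hW t)).trans (hcost t)
  have hstep : ∀ t, f t ≤ K * (W t - W (t + 1)) := fun t => by
    have hKW : K * (1 - γ) * W t = ρ * W t := by rw [hK]
    linarith [mul_le_mul_of_nonneg_left (hdecay t) hK0,
      mul_le_mul_of_nonneg_left (hcost t) (sub_nonneg.2 hKβ),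
      mul_le_mul_of_nonneg_left hγ (mul_nonneg hK0 (hW t))]
  have hpartial : ∀ N, ∑ t ∈ Finset.range N, f t ≤ K * W 0 := fun N =>
    calc ∑ t ∈ Finset.range N, f t ≤ ∑ t ∈ Finset.range N, K * (W t - W (t + 1)) :=
          Finset.sum_le_sum fun t _ => hstep t
      _ = K * (W 0 - W N) := by rw [← Finset.mul_sum, Finset.sum_range_sub']
      _ ≤ K * W 0 := mul_le_mul_of_nonneg_left (sub_le_self _ (hW N)) hK0
  exact ⟨summable_of_sum_range_le hf hpartial, Real.tsum_le_of_sum_range_le hf hpartial⟩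

theorem mpc_total_cost_bound_general {n m : ℕ}
    (A : Matrix (Fin n) (Fin n) ℝ) (B : Matrix (Fin n) (Fin m) ℝ)
    (T : ℕ) (hT : 1 ≤ T) (δ : ℝ) (hδ0 : 0 ≤ δ) (hδ1 : δ < 1)
    (Q : ℕ → Matrix (Fin n) (Fin n) ℝ) (R : ℕ → Matrix (Fin m) (Fin m) ℝ)
    (hQpd : ∀ t, (Q t).PosDef) (hRpd : ∀ t, (R t).PosDef)
    (hQhigh : ∀ t, loewnerLE (Q (t + 1)) ((1 + δ) • Q t))
    (hRhigh : ∀ t, loewnerLE (R (t + 1)) ((1 + δ) • R t))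
    (x : ℕ → Fin n → ℝ) (u : ℕ → Fin m → ℝ)
    (hu : ∀ t, u t = -(((Bᵀ * riccati A B (Q t) (R t) (T - 1) * B + R t)⁻¹ *
        Bᵀ * riccati A B (Q t) (R t) (T - 1) * A) *ᵥ x t))
    (hx : ∀ t, x (t + 1) = A *ᵥ x t + B *ᵥ u t)
    (ρ : ℝ) (hρ1 : ρ < 1)
    (hρP : ∀ t, loewnerLE (ρ • riccati A B (Q t) (R t) T) (Q t))
    (α : ℝ) (hα : 1 < α)
    (hαP : ∀ t, loewnerLE (riccati A B (Q t) (R t) T)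
      (α • riccati A B (Q t) (R t) (T - 1)))
    (γ : ℝ) (hγ : γ = (1 - ρ) * α / (1 - δ)) (hγ1 : γ < 1) :
    Summable (fun t : ℕ => x t ⬝ᵥ (Q t *ᵥ x t) + u t ⬝ᵥ (R t *ᵥ u t)) ∧
    ∑' t : ℕ, (x t ⬝ᵥ (Q t *ᵥ x t) + u t ⬝ᵥ (R t *ᵥ u t)) ≤
      (ρ / (1 - γ)) * (x 0 ⬝ᵥ (riccati A B (Q 0) (R 0) T *ᵥ x 0)) := by
  obtain ⟨k, rfl⟩ : ∃ k, T = k + 1 := ⟨T - 1, by omega⟩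
  simp only [Nat.add_sub_cancel] at hu hαP
  have hP : ∀ t j, (riccati A B (Q t) (R t) j).PosSemidef := fun t =>
    riccati_posSemidef A B (hQpd t).posSemidef (hRpd t)
  have hbellman : ∀ t, x t ⬝ᵥ (riccati A B (Q t) (R t) (k + 1) *ᵥ x t) =
      x t ⬝ᵥ (Q t *ᵥ x t) + u t ⬝ᵥ (R t *ᵥ u t) +
        x (t + 1) ⬝ᵥ (riccati A B (Q t) (R t) k *ᵥ x (t + 1)) := fun t => by
    rw [hx, hu, riccati_succ]
    exact dotProduct_riccatiStep_mulVec_eq A B (Q t) (hRpd t).posSemidef.isSymm (hP t k).isSymm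
      (isUnit_det_transpose_mul_mul_add (hP t k) (hRpd t) B) (x t)
  refine summable_and_tsum_le_of_decay (β := α * (1 + δ))
    (fun t => (hP t _).dotProduct_mulVec_nonneg' _) (fun t => ?_) (fun t => ?_) (by nlinarith) ?_ hγ1
  · have hQ := (hρP t).dotProduct_mulVec_le (x t)
    rw [dotProduct_smul_mulVec] at hQ
    linarith [(hRpd t).posSemidef.dotProduct_mulVec_nonneg' (u t)]
  · have hslow := (riccati_loewnerLE_smul A B (hQpd t).posSemidef (hRpd t)
      (hQpd (t + 1)).posSemidef (hRpd (t + 1)) (hQhigh t) (hRhigh t) (k + 1)).dotProduct_mulVec_le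
      (x (t + 1))
    have hshort := (hαP t).dotProduct_mulVec_le (x (t + 1))
    rw [dotProduct_smul_mulVec] at hslow hshort
    rw [hbellman t]
    linarith [mul_le_mul_of_nonneg_left hshort (by linarith : (0 : ℝ) ≤ 1 + δ)]
  · rw [hγ, le_div_iff₀ (by linarith)]
    nlinarith [mul_nonneg (mul_nonneg (sub_nonneg.2 hρ1.le) (zero_le_one.trans hα.le)) (sq_nonneg δ)]

/-- Appendix Lemma 2(c), second inequality: the total realized MPC cost is finite and
bounded by `(ρ/(1−γ))·x₀ᵀP_T(Q₀,R₀)x₀`. -/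
theorem mpc_total_cost_bound {n m : ℕ}
    (A : Matrix (Fin n) (Fin n) ℝ) (B : Matrix (Fin n) (Fin m) ℝ)
    (T : ℕ) (hT : 1 ≤ T) (δ : ℝ) (hδ0 : 0 ≤ δ) (hδ1 : δ < 1)
    (Q : ℕ → Matrix (Fin n) (Fin n) ℝ) (R : ℕ → Matrix (Fin m) (Fin m) ℝ)
    (hQpd : ∀ t, (Q t).PosDef) (hRpd : ∀ t, (R t).PosDef)
    (hQlow : ∀ t, loewnerLE ((1 - δ) • Q t) (Q (t + 1)))
    (hQhigh : ∀ t, loewnerLE (Q (t + 1)) ((1 + δ) • Q t))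
    (hRlow : ∀ t, loewnerLE ((1 - δ) • R t) (R (t + 1)))
    (hRhigh : ∀ t, loewnerLE (R (t + 1)) ((1 + δ) • R t))
    (x : ℕ → Fin n → ℝ) (u : ℕ → Fin m → ℝ)
    (hu : ∀ t, u t = -(((Bᵀ * riccati A B (Q t) (R t) (T - 1) * B + R t)⁻¹ *
        Bᵀ * riccati A B (Q t) (R t) (T - 1) * A) *ᵥ x t))
    (hx : ∀ t, x (t + 1) = A *ᵥ x t + B *ᵥ u t)
    (ρ : ℝ) (hρ0 : 0 < ρ) (hρ1 : ρ < 1)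
    (hρP : ∀ t, loewnerLE (ρ • riccati A B (Q t) (R t) T) (Q t))
    (α : ℝ) (hα : 1 < α)
    (hαP : ∀ t, loewnerLE (riccati A B (Q t) (R t) T)
      (α • riccati A B (Q t) (R t) (T - 1)))
    (γ : ℝ) (hγ : γ = (1 - ρ) * α / (1 - δ)) (hγ1 : γ < 1) :
    Summable (fun t : ℕ => x t ⬝ᵥ (Q t *ᵥ x t) + u t ⬝ᵥ (R t *ᵥ u t)) ∧
    ∑' t : ℕ, (x t ⬝ᵥ (Q t *ᵥ x t) + u t ⬝ᵥ (R t *ᵥ u t)) ≤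
      (ρ / (1 - γ)) * (x 0 ⬝ᵥ (riccati A B (Q 0) (R 0) T *ᵥ x 0)) :=
  mpc_total_cost_bound_general A B T hT δ hδ0 hδ1 Q R hQpd hRpd hQhigh hRhigh x u hu hx ρ hρ1 hρP α
    hα hαP γ hγ hγ1
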